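/- In a commutative semigroup (S,+), every central set is an essential CR-set, and every essential CR-set is a C-set. -/

import Mathlib

attribute [local instance] Ultrafilter.add Ultrafilter.addSemigroup

/-- `A` is combinatorially rich in the commutative semigroup `S`. -/
def CRSet {S : Type*} [AddCommMonoid S] (A : Set S) : Prop :=
  ∀ k : ℕ, ∃ r : ℕ, ∀ M : Fin r → Fin k → S,
    ∃ (a : S) (H : Finset (Fin r)), H.Nonempty ∧
      ∀ j : Fin k, a + ∑ t ∈ H, M t j ∈ A

/-- `A` is a J-set in `S`. -/
def JSet {S : Type*} [AddCommMonoid S] (A : Set S) : Prop :=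
  ∀ F : Finset (ℕ → S), ∃ (a : S) (H : Finset ℕ), H.Nonempty ∧
    ∀ f ∈ F, a + ∑ n ∈ H, f n ∈ A

/-- `p` lies in the smallest two-sided ideal `K(βS)`: for every `q`, `p ∈ βS + q + p`. -/
def InSmallestIdeal {S : Type*} [AddCommMonoid S] (p : Ultrafilter S) : Prop :=
  ∀ q : Ultrafilter S, ∃ r : Ultrafilter S, r + (q + p) = p

/-- `A` is central: there is an idempotent ultrafilter in `cl(A) ∩ K(βS)`. -/
def CentralSet {S : Type*} [AddCommMonoid S] (A : Set S) : Prop :=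
  ∃ p : Ultrafilter S, p + p = p ∧ InSmallestIdeal p ∧ A ∈ p

/-- `A` is an essential CR-set: there is an idempotent ultrafilter containing `A`
all of whose members are CR-sets (i.e. an idempotent in `cl(A) ∩ CR(S)`). -/
def EssentialCRSet {S : Type*} [AddCommMonoid S] (A : Set S) : Prop :=
  ∃ p : Ultrafilter S, p + p = p ∧ (∀ B ∈ p, CRSet B) ∧ A ∈ p

/-- `A` is a C-set: there is an idempotent ultrafilter containing `A`
all of whose members are J-sets (i.e. an idempotent in `cl(A) ∩ J(S)`). -/
def CSet {S : Type*} [AddCommMonoid S] (A : Set S) : Prop :=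
  ∃ p : Ultrafilter S, p + p = p ∧ (∀ B ∈ p, JSet B) ∧ A ∈ p


/-! Members of an ultrafilter in `K(βS)` are piecewise syndetic, piecewise syndetic sets are
CR-sets by the Hales–Jewett theorem, and CR-sets are J-sets by arranging finitely many
sequences as the columns of a matrix. -/

/-- The usual combinatorial characterization of piecewise syndeticity in a commutative semigroup:
finitely many translates `-t + A`, `t ∈ G`, cover a translate of every finite set. -/
def PiecewiseSyndetic {S : Type*} [AddCommMonoid S] (A : Set S) : Prop :=
  ∃ G : Finset S, ∀ F : Finset S, ∃ z : S, ∀ y ∈ F, ∃ t ∈ G, t + y + z ∈ A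

open Finset

theorem Combinatorics.Line.sum_apply {α ι M : Type*} [Fintype ι] [AddCommMonoid M]
    (l : Combinatorics.Line α ι) (N : ι → α → M) (x : α) :
    ∑ i, N i (l x i) =
      ∑ i ∈ univ.filter (l.idxFun · = none), N i x + ∑ i, (l.idxFun i).elim 0 (N i) := by
  rw [sum_filter, ← sum_add_distrib]
  refine sum_congr rfl fun i _ => ?_
  cases h : l.idxFun i <;> simp [h]

namespace InSmallestIdeal

variable {S : Type*} [AddCommMonoid S] {p : Ultrafilter S} {A : Set S}

theorem exists_shift_mem (hp : InSmallestIdeal p) (hA : A ∈ p) (q : Ultrafilter S) :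
    ∃ x : S, {y | {z | x + y + z ∈ A} ∈ p} ∈ q := by
  obtain ⟨r, hr⟩ := hp q
  have hA' : ∀ᶠ m in ((r + (q + p) : Ultrafilter S) : Filter S), m ∈ A := by rwa [hr]
  have hrqp : ∀ᶠ x in (r : Filter S), ∀ᶠ y in (q : Filter S), ∀ᶠ z in (p : Filter S),
      x + y + z ∈ A := by
    simpa only [Ultrafilter.eventually_add, add_assoc] using hA'
  exact hrqp.exists

/-- Compactness of `βS` makes the choice of `x` in `exists_shift_mem` finite. -/
theorem exists_finset_shift_mem (hp : InSmallestIdeal p) (hA : A ∈ p) :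
    ∃ G : Finset S, ∀ y : S, ∃ t ∈ G, {z | t + y + z ∈ A} ∈ p := by
  obtain ⟨G, hG⟩ := isCompact_univ.elim_finite_subcover
    (fun x : S => {q : Ultrafilter S | {y | {z | x + y + z ∈ A} ∈ p} ∈ q})
    (fun x => ultrafilter_isOpen_basic _)
    (fun q _ => Set.mem_iUnion.mpr (hp.exists_shift_mem hA q))
  refine ⟨G, fun y => ?_⟩
  simpa using hG (Set.mem_univ (pure y))

theorem piecewiseSyndetic (hp : InSmallestIdeal p) (hA : A ∈ p) : PiecewiseSyndetic A := by
  obtain ⟨G, hG⟩ := hp.exists_finset_shift_mem hA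
  choose t htG htp using hG
  refine ⟨G, fun F => ?_⟩
  have hF : (⋂ y ∈ F, {z | t y + y + z ∈ A}) ∈ p :=
    (Filter.biInter_mem F.finite_toSet).mpr fun y _ => htp y
  obtain ⟨z, hz⟩ := Ultrafilter.nonempty_of_mem hF
  exact ⟨z, fun y hy => ⟨t y, htG y, Set.mem_iInter₂.mp hz y hy⟩⟩

end InSmallestIdeal

section

variable {S : Type*} [AddCommMonoid S] {A : Set S}

/-- Colour each word `w ∈ kᶥ` by an element of `G` translating `∑ i, M i (w i)` into `A`;
a monochromatic combinatorial line (Hales–Jewett) gives the required `a` and `H`. -/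
theorem PiecewiseSyndetic.crSet (hA : PiecewiseSyndetic A) : CRSet A := by
  classical
  obtain ⟨G, hG⟩ := hA
  intro k
  obtain ⟨ι, _, hHJ⟩ := Combinatorics.Line.exists_mono_in_high_dimension (Fin k) G
  let e := Fintype.equivFin ι
  refine ⟨Fintype.card ι, fun M => ?_⟩
  let N : ι → Fin k → S := fun i => M (e i)
  obtain ⟨z, hz⟩ := hG (univ.image fun w : ι → Fin k => ∑ i, N i (w i))
  have hcolour : ∀ w : ι → Fin k, ∃ t : G, (t : S) + ∑ i, N i (w i) + z ∈ A := by
    intro w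
    obtain ⟨t, htG, ht⟩ := hz _ (mem_image_of_mem _ (mem_univ w))
    exact ⟨⟨t, htG⟩, ht⟩
  choose C hC using hcolour
  obtain ⟨l, c, hc⟩ := hHJ C
  let H := univ.filter (l.idxFun · = none)
  have hH : H.Nonempty := l.proper.imp fun i hi => by simp [H, hi]
  refine ⟨c + ∑ i, (l.idxFun i).elim 0 (N i) + z, H.map e.toEmbedding, hH.map, fun j => ?_⟩
  have hj := hC (l j)
  rw [hc j, l.sum_apply] at hj
  rw [sum_map]
  convert hj using 1
  simp only [Equiv.coe_toEmbedding, N]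
  abel

theorem CRSet.jSet (hA : CRSet A) : JSet A := by
  intro F
  obtain ⟨r, hr⟩ := hA F.card
  obtain ⟨a, H, hH, hHA⟩ := hr fun t j => (F.equivFin.symm j : ℕ → S) t
  refine ⟨a, H.map Fin.valEmbedding, hH.map, fun f hf => ?_⟩
  simpa [sum_map] using hHA (F.equivFin ⟨f, hf⟩)

end

/-- central ⇒ essential CR-set ⇒ C-set. -/
theorem stmt13 {S : Type*} [AddCommMonoid S] :
    (∀ A : Set S, CentralSet A → EssentialCRSet A) ∧
    (∀ A : Set S, EssentialCRSet A → CSet A) := by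
  constructor
  · rintro A ⟨p, hpp, hp, hA⟩
    exact ⟨p, hpp, fun B hB => (hp.piecewiseSyndetic hB).crSet, hA⟩
  · rintro A ⟨p, hpp, hp, hA⟩
    exact ⟨p, hpp, fun B hB => (hp B hB).jSet, hA⟩
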